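/- Let fₙ be the unique càdlàg function satisfying fₙ(t) = a₀ + Σ_{(x,y)∈Π, |y|≤n} 1_{(t₀,t]}(x) y^⟨−1/α(fₙ(x₋))⟩. Then for all m > n ≥ 2, ‖f_m − f_n‖_∞ ≤ exp(M Σ_{(x,y)∈Π, |y|≤n} |y|^{-1/(a,b)}) · Σ_{(x,y)∈Π, |y|>n} |y|^{-1/b}, so {fₙ} is a Cauchy sequence in (D[t₀,t₁), ‖·‖_∞). -/

import Mathlib

/-!
Only finitely many points of `Π` with `y ≠ 0` have `|y| ≤ m`, so `f_m` and `f_n` are finite sums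
of jumps. At a jump with `|y| ≤ n`, the mean value theorem for `s ↦ |y| ^ s` and for `1 / α` gives
`|y^⟨-1/α(u)⟩ - y^⟨-1/α(v)⟩| ≤ M |y|^{-1/(a,b)} |u - v|`, while a jump with `n < |y| ≤ m` is at most
`|y|^{-1/b}`. Hence `|f_m - f_n|`, both at `t` and just before each jump, obeys a discrete Grönwall
inequality, which yields the bound. The tails `∑_{|y| > n} |y|^{-1/b}` tend to zero by dominated
convergence, and the exponential factors stay below `exp (M ∑_Π |y|^{-1/(a,b)})`, which is finite
because `log |y| = O(|y| ^ (1/b - 1/b'))`.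
-/

open MeasureTheory Filter Set

noncomputable def spow (r s : ℝ) : ℝ := Real.sign r * |r| ^ s

noncomputable def wab (a b y : ℝ) : ℝ :=
  max (|y| ^ (-1 / a) * (1 + abs (Real.log (abs y)))) (|y| ^ (-1 / b) * (1 + abs (Real.log (abs y))))

noncomputable def Mconst (α : ℝ → ℝ) : ℝ := ⨆ ξ : ℝ, |deriv α ξ| / (α ξ) ^ 2

/-- Càdlàg on `[t₀,t₁)`: right-continuous on `[t₀,t₁)` and left limits exist on `(t₀,t₁]`. -/
def CadlagOn (f : ℝ → ℝ) (t₀ t₁ : ℝ) : Prop :=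
  (∀ u ∈ Set.Ico t₀ t₁, Filter.Tendsto f (nhdsWithin u (Set.Ioi u)) (nhds (f u))) ∧
  (∀ u ∈ Set.Ioc t₀ t₁, ∃ L, Filter.Tendsto f (nhdsWithin u (Set.Iio u)) (nhds L))

/-- The sum `∑_{(x,y)∈Λ} 1_{(t₀,t]}(x) y^⟨-1/α(f(x₋))⟩`. -/
noncomputable def jumpSum (α : ℝ → ℝ) (Λ : Set (ℝ × ℝ)) (t₀ t : ℝ) (f : ℝ → ℝ) : ℝ :=
  ∑' p : Λ, if (p : ℝ × ℝ).1 ∈ Set.Ioc t₀ t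
    then spow (p : ℝ × ℝ).2 (-1 / α (Function.leftLim f (p : ℝ × ℝ).1)) else 0

/-- The truncated sum over points with `|y| ≤ n`. -/
noncomputable def jumpSumTrunc (α : ℝ → ℝ) (Λ : Set (ℝ × ℝ)) (n : ℝ) (t₀ t : ℝ) (f : ℝ → ℝ) : ℝ :=
  ∑' p : Λ, if |(p : ℝ × ℝ).2| ≤ n ∧ (p : ℝ × ℝ).1 ∈ Set.Ioc t₀ t
    then spow (p : ℝ × ℝ).2 (-1 / α (Function.leftLim f (p : ℝ × ℝ).1)) else 0

open Topology
open Function (leftLim)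

lemma spow_zero_left (s : ℝ) : spow 0 s = 0 := by simp [spow]

lemma abs_spow_le (y s : ℝ) : |spow y s| ≤ |y| ^ s := by
  have hpow : 0 ≤ |y| ^ s := by positivity
  rw [spow, abs_mul, abs_of_nonneg hpow]
  refine mul_le_of_le_one_left hpow ?_
  rcases Real.sign_apply_eq y with h | h | h <;> simp [h]

lemma rpow_le_max_of_mem_Icc {y lo hi s : ℝ} (hy : 0 < y) (hs : s ∈ Icc lo hi) :
    y ^ s ≤ max (y ^ lo) (y ^ hi) := by
  rcases le_total 1 y with h | h
  · exact le_max_of_le_right (Real.rpow_le_rpow_of_exponent_le h hs.2)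
  · exact le_max_of_le_left (Real.rpow_le_rpow_of_exponent_ge hy h hs.1)

lemma abs_rpow_sub_rpow_le {y lo hi s s' : ℝ} (hy : 0 < y) (hs : s ∈ Icc lo hi)
    (hs' : s' ∈ Icc lo hi) :
    |y ^ s - y ^ s'| ≤ max (y ^ lo) (y ^ hi) * |Real.log y| * |s - s'| := by
  have hderiv : ∀ r ∈ Icc lo hi,
      HasDerivWithinAt (fun r => y ^ r) (y ^ r * Real.log y) (Icc lo hi) r :=
    fun r _ => (Real.hasStrictDerivAt_const_rpow hy r).hasDerivAt.hasDerivWithinAt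
  have hbound : ∀ r ∈ Icc lo hi, ‖y ^ r * Real.log y‖ ≤ max (y ^ lo) (y ^ hi) * |Real.log y| := by
    intro r hr
    rw [Real.norm_eq_abs, abs_mul, abs_of_pos (Real.rpow_pos_of_pos hy r)]
    exact mul_le_mul_of_nonneg_right (rpow_le_max_of_mem_Icc hy hr) (abs_nonneg _)
  simpa [Real.norm_eq_abs] using
    (convex_Icc lo hi).norm_image_sub_le_of_norm_hasDerivWithin_le hderiv hbound hs' hs

lemma abs_spow_sub_spow_le (y : ℝ) {lo hi s s' : ℝ} (hs : s ∈ Icc lo hi) (hs' : s' ∈ Icc lo hi) :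
    |spow y s - spow y s'| ≤ max (|y| ^ lo) (|y| ^ hi) * |(Real.log |y|)| * |s - s'| := by
  rcases eq_or_ne y 0 with rfl | hy
  · simp only [spow_zero_left, sub_zero, abs_zero]
    positivity
  have hsign : |Real.sign y| = 1 := by
    rcases Real.sign_apply_eq_of_ne_zero y hy with h | h <;> simp [h]
  rw [spow, spow, ← mul_sub, abs_mul, hsign, one_mul]
  exact abs_rpow_sub_rpow_le (abs_pos.2 hy) hs hs'

lemma neg_one_div_mem_Icc {a b z : ℝ} (ha : 0 < a) (hz : z ∈ Icc a b) :
    -1 / z ∈ Icc (-1 / a) (-1 / b) := by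
  simp only [neg_div, mem_Icc, neg_le_neg_iff]
  exact ⟨one_div_le_one_div_of_le ha hz.1, one_div_le_one_div_of_le (ha.trans_le hz.1) hz.2⟩

lemma wab_nonneg (a b y : ℝ) : 0 ≤ wab a b y :=
  le_max_of_le_left (by positivity)

lemma wab_zero {a b : ℝ} (ha : 0 < a) (hb : 0 < b) : wab a b 0 = 0 := by
  simp [wab, Real.zero_rpow, ha.ne', hb.ne']

lemma max_rpow_mul_abs_log_le_wab (a b y : ℝ) :
    max (|y| ^ (-1 / a)) (|y| ^ (-1 / b)) * |(Real.log |y|)| ≤ wab a b y := by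
  rw [wab, ← max_mul_of_nonneg _ _ (by positivity)]
  exact mul_le_mul_of_nonneg_left (by linarith) (le_max_of_le_left (by positivity))

lemma wab_le_of_one_le_abs {a b b' y : ℝ} (ha : 0 < a) (hab : a < b) (hbb' : b < b')
    (hy : 1 ≤ |y|) : wab a b y ≤ (1 + 1 / (1 / b - 1 / b')) * |y| ^ (-1 / b') := by
  have hb : 0 < b := ha.trans hab
  set δ := 1 / b - 1 / b'
  have hδ : 0 < δ := sub_pos.2 (one_div_lt_one_div_of_lt hb hbb')
  have hlog : 0 ≤ Real.log |y| := Real.log_nonneg hy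
  have hab' : |y| ^ (-1 / a) ≤ |y| ^ (-1 / b) :=
    Real.rpow_le_rpow_of_exponent_le hy (neg_one_div_mem_Icc ha ⟨le_rfl, hab.le⟩).2
  have hpow : 1 ≤ |y| ^ δ := Real.one_le_rpow hy hδ.le
  have hlog_le : 1 + Real.log |y| ≤ (1 + 1 / δ) * |y| ^ δ := by
    have := Real.log_le_rpow_div (abs_nonneg y) hδ
    rw [div_eq_mul_one_div, mul_comm] at this
    nlinarith
  calc wab a b y = |y| ^ (-1 / b) * (1 + Real.log |y|) := by
        rw [wab, abs_of_nonneg hlog]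
        exact max_eq_right (mul_le_mul_of_nonneg_right hab' (by linarith))
    _ ≤ |y| ^ (-1 / b) * ((1 + 1 / δ) * |y| ^ δ) := by gcongr
    _ = (1 + 1 / δ) * |y| ^ (-1 / b') := by
        rw [mul_left_comm, ← Real.rpow_add (by linarith)]
        congr 2
        ring

lemma Mconst_nonneg (α : ℝ → ℝ) : 0 ≤ Mconst α :=
  Real.iSup_nonneg fun _ => by positivity

lemma abs_inv_sub_inv_le_Mconst_mul {a : ℝ} {α : ℝ → ℝ} (ha : 0 < a) (hα : ∀ x, a ≤ α x)
    (hdiff : Differentiable ℝ α) (hbd : ∃ C, ∀ x, |deriv α x| ≤ C) (u v : ℝ) :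
    |(α u)⁻¹ - (α v)⁻¹| ≤ Mconst α * |u - v| := by
  obtain ⟨C, hC⟩ := hbd
  have hpos : ∀ x, 0 < α x := fun x => ha.trans_le (hα x)
  have hbdd : BddAbove (range fun ξ => |deriv α ξ| / α ξ ^ 2) := by
    refine ⟨C / a ^ 2, forall_mem_range.2 fun x => ?_⟩
    exact div_le_div₀ ((abs_nonneg _).trans (hC x)) (hC x) (by positivity)
      (pow_le_pow_left₀ ha.le (hα x) 2)
  have hderiv : ∀ x ∈ (univ : Set ℝ),
      HasDerivWithinAt (fun y => (α y)⁻¹) (-deriv α x / α x ^ 2) univ x :=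
    fun x _ => ((hdiff x).hasDerivAt.inv (hpos x).ne').hasDerivWithinAt
  have hbound : ∀ x ∈ (univ : Set ℝ), ‖-deriv α x / α x ^ 2‖ ≤ Mconst α := by
    intro x _
    rw [Real.norm_eq_abs, abs_div, abs_neg, abs_of_nonneg (sq_nonneg (α x))]
    exact le_ciSup hbdd x
  simpa [Real.norm_eq_abs] using
    convex_univ.norm_image_sub_le_of_norm_hasDerivWithin_le hderiv hbound (mem_univ v) (mem_univ u)

theorem discrete_gronwall_finset {ι : Type*} [DecidableEq ι] (s : Finset ι) (g : ι → ℝ)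
    {c u : ι → ℝ} {B : ℝ} (hB : 0 ≤ B) (hc : ∀ i ∈ s, 0 ≤ c i) (hu : ∀ i ∈ s, 0 ≤ u i)
    (h : ∀ j ∈ s, u j ≤ B + ∑ k ∈ s with g k < g j, c k * u k) :
    B + ∑ k ∈ s, c k * u k ≤ B * Real.exp (∑ k ∈ s, c k) := by
  induction s using Finset.induction_on_max_value g with
  | empty => simp
  | insert i s hi hmax ih =>
    have hfilter : ∀ j ∈ s, {k ∈ insert i s | g k < g j} = {k ∈ s | g k < g j} := fun j hj => by
      rw [Finset.filter_insert, if_neg (hmax j hj).not_gt]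
    have hci := hc i (Finset.mem_insert_self i s)
    have ih : B + ∑ k ∈ s, c k * u k ≤ B * Real.exp (∑ k ∈ s, c k) :=
      ih (fun j hj => hc j (Finset.mem_insert_of_mem hj))
        (fun j hj => hu j (Finset.mem_insert_of_mem hj))
        (fun j hj => hfilter j hj ▸ h j (Finset.mem_insert_of_mem hj))
    have hui : u i ≤ B + ∑ k ∈ s, c k * u k := by
      have := h i (Finset.mem_insert_self i s)
      rw [Finset.filter_insert, if_neg (lt_irrefl _)] at this
      refine this.trans (add_le_add_right ?_ B)
      exact Finset.sum_le_sum_of_subset_of_nonneg (Finset.filter_subset _ _) fun k hk _ =>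
        mul_nonneg (hc k (Finset.mem_insert_of_mem hk)) (hu k (Finset.mem_insert_of_mem hk))
    calc B + ∑ k ∈ insert i s, c k * u k
        = B + ∑ k ∈ s, c k * u k + c i * u i := by rw [Finset.sum_insert hi]; ring
      _ ≤ (B + ∑ k ∈ s, c k * u k) * (1 + c i) := by nlinarith
      _ ≤ B * Real.exp (∑ k ∈ s, c k) * Real.exp (c i) := by
        gcongr
        linarith [Real.add_one_le_exp (c i)]
      _ = B * Real.exp (∑ k ∈ insert i s, c k) := by
        rw [Finset.sum_insert hi, add_comm (c i), Real.exp_add, mul_assoc]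

section Summability

variable {ι : Type*} {y : ι → ℝ}

lemma finite_setOf_ne_zero_abs_le {s : ℝ} (hs : s < 0) (h : Summable fun i => |y i| ^ s) (R : ℝ) :
    {i | y i ≠ 0 ∧ |y i| ≤ R}.Finite := by
  rcases le_or_gt R 0 with hR | hR
  · refine Set.finite_empty.subset fun i hi => ?_
    exact absurd (abs_pos.2 hi.1) (hi.2.trans hR).not_gt
  · refine (Filter.eventually_cofinite.1
      (h.tendsto_cofinite_zero.eventually_lt_const (Real.rpow_pos_of_pos hR s))).subset ?_
    rintro i ⟨hi, hiR⟩
    exact (Real.rpow_le_rpow_of_nonpos (abs_pos.2 hi) hiR hs.le).not_gt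

variable {a b b' : ℝ}

lemma summable_wab (ha : 0 < a) (hab : a < b) (hbb' : b < b')
    (h : Summable fun i => |y i| ^ (-1 / b')) : Summable fun i => wab a b (y i) := by
  have hb' : 0 < b' := ha.trans (hab.trans hbb')
  have hδ : 0 < 1 / b - 1 / b' := sub_pos.2 (one_div_lt_one_div_of_lt (ha.trans hab) hbb')
  refine Summable.of_norm_bounded_eventually (h.mul_left (1 + 1 / (1 / b - 1 / b'))) <|
    Filter.eventually_cofinite.2 <|
      (finite_setOf_ne_zero_abs_le (by simpa [neg_div] using hb') h 1).subset fun i hi => ?_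
  replace hi : ¬ wab a b (y i) ≤ (1 + 1 / (1 / b - 1 / b')) * |y i| ^ (-1 / b') := by
    simpa [abs_of_nonneg (wab_nonneg _ _ _)] using hi
  refine ⟨fun h0 => hi ?_, le_of_not_ge fun h1 => hi (wab_le_of_one_le_abs ha hab hbb' h1)⟩
  rw [h0, wab_zero ha (ha.trans hab)]
  positivity

lemma summable_ite_wab (ha : 0 < a) (hab : a < b) (hbb' : b < b')
    (h : Summable fun i => |y i| ^ (-1 / b')) (P : ι → Prop) [DecidablePred P] :
    Summable fun i => if P i then wab a b (y i) else 0 :=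
  (summable_wab ha hab hbb' h).of_nonneg_of_le (fun i => by split_ifs <;> simp [wab_nonneg])
    fun i => by split_ifs <;> simp [wab_nonneg]

lemma tsum_ite_wab_le (ha : 0 < a) (hab : a < b) (hbb' : b < b')
    (h : Summable fun i => |y i| ^ (-1 / b')) (P : ι → Prop) [DecidablePred P] :
    ∑' i, (if P i then wab a b (y i) else 0) ≤ ∑' i, wab a b (y i) :=
  (summable_ite_wab ha hab hbb' h P).tsum_le_tsum (fun i => by split_ifs <;> simp [wab_nonneg])
    (summable_wab ha hab hbb' h)

lemma tail_le_rpow {b b' n : ℝ} (hb : 0 < b) (hbb' : b ≤ b') (hn : 1 ≤ n) (y : ℝ) :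
    (if n < |y| then |y| ^ (-1 / b) else 0) ≤ |y| ^ (-1 / b') := by
  split_ifs with hy
  · refine Real.rpow_le_rpow_of_exponent_le (hn.trans hy.le) ?_
    simpa [neg_div] using one_div_le_one_div_of_le hb hbb'
  · positivity

lemma summable_tail {n : ℝ} (hb : 0 < b) (hbb' : b ≤ b') (hn : 1 ≤ n)
    (h : Summable fun i => |y i| ^ (-1 / b')) :
    Summable fun i => if n < |y i| then |y i| ^ (-1 / b) else 0 :=
  h.of_nonneg_of_le (fun i => by split_ifs <;> positivity) fun i => tail_le_rpow hb hbb' hn _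

lemma tendsto_tsum_tail (hb : 0 < b) (hbb' : b ≤ b') (h : Summable fun i => |y i| ^ (-1 / b')) :
    Tendsto (fun n : ℕ => ∑' i, if (n : ℝ) < |y i| then |y i| ^ (-1 / b) else 0) atTop (𝓝 0) := by
  have hlim : ∀ i, Tendsto (fun n : ℕ => if (n : ℝ) < |y i| then |y i| ^ (-1 / b) else 0)
      atTop (𝓝 0) := fun i => by
    refine tendsto_const_nhds.congr' ?_
    filter_upwards [eventually_ge_atTop ⌈|y i|⌉₊] with n hn
    rw [if_neg (not_lt.2 (Nat.ceil_le.1 hn))]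
  simpa using tendsto_tsum_of_dominated_convergence h hlim <| by
    filter_upwards [eventually_ge_atTop 1] with n hn i
    rw [Real.norm_eq_abs, abs_of_nonneg (by split_ifs <;> positivity)]
    exact tail_le_rpow hb hbb' (Nat.one_le_cast.2 hn) (y i)

end Summability

lemma leftLim_eq_add_sum_filter_Ioo_of_eventually {ι : Type*} (s : Finset ι) (g v : ι → ℝ)
    {f : ℝ → ℝ} {c t₀ x : ℝ} (hf : ∀ᶠ t in 𝓝[<] x, f t = c + ∑ i ∈ s with g i ∈ Ioc t₀ t, v i) :
    leftLim f x = c + ∑ i ∈ s with g i ∈ Ioo t₀ x, v i := by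
  have hmem : ∀ i ∈ s, ∀ᶠ t in 𝓝[<] x, (g i ∈ Ioc t₀ t ↔ g i ∈ Ioo t₀ x) := by
    intro i _
    rcases lt_or_ge (g i) x with h | h
    · filter_upwards [Ioo_mem_nhdsLT h] with t ht
      exact ⟨fun hi => ⟨hi.1, h⟩, fun hi => ⟨hi.1, ht.1.le⟩⟩
    · filter_upwards [self_mem_nhdsWithin] with t (ht : t < x)
      exact ⟨fun hi => absurd (hi.2.trans_lt ht) h.not_gt, fun hi => absurd hi.2 h.not_gt⟩
  refine leftLim_eq_of_tendsto (tendsto_const_nhds.congr' ?_)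
  filter_upwards [hf, (Filter.eventually_all_finset s).2 hmem] with t hft hiff
  rw [hft, Finset.filter_congr hiff]

noncomputable def truncJump (α : ℝ → ℝ) (n : ℝ) (f : ℝ → ℝ) (q : ℝ × ℝ) : ℝ :=
  if |q.2| ≤ n then spow q.2 (-1 / α (leftLim f q.1)) else 0

section JumpEquation

variable {α : ℝ → ℝ} {Λ : Set (ℝ × ℝ)} {n t₀ t₁ a₀ : ℝ} {f : ℝ → ℝ} {T : Finset Λ}

lemma jumpSumTrunc_eq_sum_filter
    (hT : ∀ p : Λ, (p : ℝ × ℝ).2 ≠ 0 → |(p : ℝ × ℝ).2| ≤ n → p ∈ T) (t : ℝ) :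
    jumpSumTrunc α Λ n t₀ t f = ∑ p ∈ T with (p : Λ).1.1 ∈ Ioc t₀ t, truncJump α n f p := by
  rw [Finset.sum_filter, jumpSumTrunc, tsum_eq_sum (s := T)]
  · refine Finset.sum_congr rfl fun p _ => ?_
    rw [truncJump, ← ite_and]
    exact if_congr and_comm rfl rfl
  · intro p hp
    split_ifs with h
    · rw [not_not.1 fun hy => hp (hT p hy h.1), spow_zero_left]
    · rfl

lemma leftLim_eq_add_sum_filter_Ioo
    (hT : ∀ p : Λ, (p : ℝ × ℝ).2 ≠ 0 → |(p : ℝ × ℝ).2| ≤ n → p ∈ T)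
    (hf : ∀ t ∈ Ico t₀ t₁, f t = a₀ + jumpSumTrunc α Λ n t₀ t f)
    {x : ℝ} (hx : x ∈ Ioc t₀ t₁) :
    leftLim f x = a₀ + ∑ p ∈ T with (p : Λ).1.1 ∈ Ioo t₀ x, truncJump α n f p := by
  refine leftLim_eq_add_sum_filter_Ioo_of_eventually T (fun p : Λ => (p : ℝ × ℝ).1) _ ?_
  filter_upwards [Ioo_mem_nhdsLT hx.1] with s hs
  rw [hf s ⟨hs.1.le, hs.2.trans_le hx.2⟩, jumpSumTrunc_eq_sum_filter hT]

end JumpEquation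

section Estimate

variable {a b : ℝ} {α : ℝ → ℝ}

lemma abs_spow_le_of_one_le_abs {y z : ℝ} (ha : 0 < a) (hz : z ∈ Icc a b) (hy : 1 ≤ |y|) :
    |spow y (-1 / z)| ≤ |y| ^ (-1 / b) :=
  (abs_spow_le y _).trans (Real.rpow_le_rpow_of_exponent_le hy (neg_one_div_mem_Icc ha hz).2)

lemma abs_spow_sub_spow_le_Mconst_mul (ha : 0 < a) (hrange : ∀ x, α x ∈ Icc a b)
    (hdiff : Differentiable ℝ α) (hbd : ∃ C, ∀ x, |deriv α x| ≤ C) (y u v : ℝ) :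
    |spow y (-1 / α u) - spow y (-1 / α v)| ≤ Mconst α * wab a b y * |u - v| := by
  have hexp : |-1 / α u - -1 / α v| ≤ Mconst α * |u - v| := by
    rw [show -1 / α u - -1 / α v = -((α u)⁻¹ - (α v)⁻¹) by ring, abs_neg]
    exact abs_inv_sub_inv_le_Mconst_mul ha (fun x => (hrange x).1) hdiff hbd u v
  calc |spow y (-1 / α u) - spow y (-1 / α v)|
      ≤ max (|y| ^ (-1 / a)) (|y| ^ (-1 / b)) * |(Real.log |y|)| * |-1 / α u - -1 / α v| :=
        abs_spow_sub_spow_le y (neg_one_div_mem_Icc ha (hrange u))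
          (neg_one_div_mem_Icc ha (hrange v))
    _ ≤ wab a b y * (Mconst α * |u - v|) :=
        mul_le_mul (max_rpow_mul_abs_log_le_wab a b y) hexp (abs_nonneg _) (wab_nonneg a b y)
    _ = Mconst α * wab a b y * |u - v| := by ring

lemma abs_truncJump_sub_truncJump_le (ha : 0 < a) (hrange : ∀ x, α x ∈ Icc a b)
    (hdiff : Differentiable ℝ α) (hbd : ∃ C, ∀ x, |deriv α x| ≤ C) {m n : ℝ} (hn : 1 ≤ n)
    (hnm : n ≤ m) (f g : ℝ → ℝ) (q : ℝ × ℝ) :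
    |truncJump α m f q - truncJump α n g q| ≤
      Mconst α * (if |q.2| ≤ n then wab a b q.2 else 0) * |leftLim f q.1 - leftLim g q.1| +
        (if n < |q.2| then |q.2| ^ (-1 / b) else 0) := by
  unfold truncJump
  by_cases hq : |q.2| ≤ n
  · rw [if_pos (hq.trans hnm), if_pos hq, if_pos hq, if_neg hq.not_gt, add_zero]
    exact abs_spow_sub_spow_le_Mconst_mul ha hrange hdiff hbd _ _ _
  · rw [if_neg hq, if_neg hq, if_pos (not_le.1 hq), mul_zero, zero_mul, sub_zero, zero_add]
    split_ifs
    · exact abs_spow_le_of_one_le_abs ha (hrange _) (hn.trans (not_le.1 hq).le)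
    · simp only [abs_zero]
      positivity

variable {b' t₀ t₁ a₀ : ℝ} {Λ : Set (ℝ × ℝ)}

lemma abs_sum_truncJump_sub_le (ha : 0 < a) (hab : a < b) (hbb' : b < b')
    (hrange : ∀ x, α x ∈ Icc a b) (hdiff : Differentiable ℝ α)
    (hbd : ∃ C, ∀ x, |deriv α x| ≤ C) (hΛ : Summable fun p : Λ => |(p : ℝ × ℝ).2| ^ (-1 / b'))
    {m n : ℝ} (hn : 1 ≤ n) (hnm : n ≤ m) (F G : ℝ → ℝ) (S : Finset Λ) :
    |∑ p ∈ S, (truncJump α m F p - truncJump α n G p)| ≤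
      ∑' p : Λ, (if n < |(p : ℝ × ℝ).2| then |(p : ℝ × ℝ).2| ^ (-1 / b) else 0) +
        ∑ p ∈ S, Mconst α * (if |(p : ℝ × ℝ).2| ≤ n then wab a b (p : ℝ × ℝ).2 else 0) *
          |leftLim F (p : ℝ × ℝ).1 - leftLim G (p : ℝ × ℝ).1| := by
  have hβ := summable_tail (ha.trans hab) hbb'.le hn hΛ
  calc _ ≤ ∑ p ∈ S, (Mconst α * (if |(p : ℝ × ℝ).2| ≤ n then wab a b (p : ℝ × ℝ).2 else 0) *
          |leftLim F (p : ℝ × ℝ).1 - leftLim G (p : ℝ × ℝ).1| +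
            (if n < |(p : ℝ × ℝ).2| then |(p : ℝ × ℝ).2| ^ (-1 / b) else 0)) :=
        (Finset.abs_sum_le_sum_abs _ _).trans <| Finset.sum_le_sum fun p _ =>
          abs_truncJump_sub_truncJump_le ha hrange hdiff hbd hn hnm F G p
    _ ≤ _ := by
        rw [Finset.sum_add_distrib, add_comm]
        exact add_le_add_left (hβ.sum_le_tsum S fun p _ => by split_ifs <;> positivity) _

lemma iSup_abs_sub_le_exp_mul_tail (ha : 0 < a) (hab : a < b) (hbb' : b < b')
    (hrange : ∀ x, α x ∈ Icc a b) (hdiff : Differentiable ℝ α) (hbd : ∃ C, ∀ x, |deriv α x| ≤ C)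
    (hΛ : Summable fun p : Λ => |(p : ℝ × ℝ).2| ^ (-1 / b'))
    {m n : ℝ} (hn : 1 ≤ n) (hnm : n ≤ m) {F G : ℝ → ℝ}
    (hF : ∀ t ∈ Ico t₀ t₁, F t = a₀ + jumpSumTrunc α Λ m t₀ t F)
    (hG : ∀ t ∈ Ico t₀ t₁, G t = a₀ + jumpSumTrunc α Λ n t₀ t G) :
    (⨆ t : Ico t₀ t₁, |F t - G t|) ≤
      Real.exp (Mconst α * ∑' p : Λ, (if |(p : ℝ × ℝ).2| ≤ n then wab a b (p : ℝ × ℝ).2 else 0)) *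
        ∑' p : Λ, (if n < |(p : ℝ × ℝ).2| then |(p : ℝ × ℝ).2| ^ (-1 / b) else 0) := by
  set w : Λ → ℝ := fun p => if |(p : ℝ × ℝ).2| ≤ n then wab a b (p : ℝ × ℝ).2 else 0
  set B := ∑' p : Λ, (if n < |(p : ℝ × ℝ).2| then |(p : ℝ × ℝ).2| ^ (-1 / b) else 0)
  set E : Λ → ℝ := fun p => |leftLim F (p : ℝ × ℝ).1 - leftLim G (p : ℝ × ℝ).1|
  have hw : ∀ p, 0 ≤ w p := fun p => by
    simp only [w]; split_ifs <;> simp [wab_nonneg]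
  have hB : 0 ≤ B := tsum_nonneg fun p => by split_ifs <;> positivity
  have hb' : (-1 / b' : ℝ) < 0 := by
    simpa [neg_div] using ha.trans (hab.trans hbb')
  set T := (finite_setOf_ne_zero_abs_le hb' hΛ m).toFinset
  have hT : ∀ k ≤ m, ∀ p : Λ, (p : ℝ × ℝ).2 ≠ 0 → |(p : ℝ × ℝ).2| ≤ k → p ∈ T :=
    fun k hk p hp hpk => (Set.Finite.mem_toFinset _).2 ⟨hp, hpk.trans hk⟩
  have hsum := abs_sum_truncJump_sub_le ha hab hbb' hrange hdiff hbd hΛ hn hnm F G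
  refine Real.iSup_le (fun ⟨t, ht⟩ => ?_) (mul_nonneg (Real.exp_pos _).le hB)
  set S := T.filter fun p : Λ => (p : ℝ × ℝ).1 ∈ Ioc t₀ t
  have hrec : ∀ j ∈ S,
      E j ≤ B + ∑ k ∈ S with (k : Λ).1.1 < (j : Λ).1.1, Mconst α * w k * E k := by
    intro j hj
    obtain ⟨-, hjt⟩ := Finset.mem_filter.1 hj
    have hfilter : {k ∈ T | (k : Λ).1.1 ∈ Ioo t₀ (j : Λ).1.1} =
        {k ∈ S | (k : Λ).1.1 < (j : Λ).1.1} := by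
      rw [Finset.filter_filter]
      exact Finset.filter_congr fun k _ =>
        ⟨fun h => ⟨⟨h.1, h.2.le.trans hjt.2⟩, h.2⟩, fun h => ⟨h.1.1, h.2⟩⟩
    have hj₁ : (j : ℝ × ℝ).1 ∈ Ioc t₀ t₁ := ⟨hjt.1, hjt.2.trans ht.2.le⟩
    rw [← hfilter]
    simpa only [E, leftLim_eq_add_sum_filter_Ioo (hT m le_rfl) hF hj₁,
      leftLim_eq_add_sum_filter_Ioo (hT n hnm) hG hj₁, add_sub_add_left_eq_sub,
      Finset.sum_sub_distrib] using hsum _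
  calc |F t - G t| = |∑ p ∈ S, (truncJump α m F p - truncJump α n G p)| := by
        rw [hF t ht, hG t ht, jumpSumTrunc_eq_sum_filter (hT m le_rfl),
          jumpSumTrunc_eq_sum_filter (hT n hnm), add_sub_add_left_eq_sub, Finset.sum_sub_distrib]
    _ ≤ B + ∑ p ∈ S, Mconst α * w p * E p := hsum S
    _ ≤ B * Real.exp (∑ p ∈ S, Mconst α * w p) :=
        discrete_gronwall_finset S (fun p : Λ => (p : ℝ × ℝ).1) hB
          (fun p _ => mul_nonneg (Mconst_nonneg α) (hw p)) (fun p _ => abs_nonneg _) hrec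
    _ ≤ B * Real.exp (Mconst α * ∑' p, w p) := by
        rw [← Finset.mul_sum]
        gcongr
        · exact Mconst_nonneg α
        · exact (summable_ite_wab ha hab hbb' hΛ _).sum_le_tsum S fun p _ => hw p
    _ = _ := mul_comm _ _

end Estimate

theorem stmt6_general (a b b' t₀ t₁ a₀ : ℝ) (ha : 0 < a) (hab : a < b) (hbb' : b < b')
    (α : ℝ → ℝ) (hrange : ∀ x, α x ∈ Set.Icc a b) (hsmooth : ContDiff ℝ 1 α)
    (hbd : ∃ C, ∀ x, |deriv α x| ≤ C)
    (Λ : Set (ℝ × ℝ))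
    (hΛ : Summable fun p : Λ => |(p : ℝ × ℝ).2| ^ (-1 / b'))
    (F : ℕ → ℝ → ℝ)
    (hF : ∀ n : ℕ, CadlagOn (F n) t₀ t₁ ∧
      ∀ t ∈ Set.Ico t₀ t₁, F n t = a₀ + jumpSumTrunc α Λ n t₀ t (F n)) :
    (∀ m n : ℕ, 2 ≤ n → n < m →
      (⨆ t : Set.Ico t₀ t₁, |F m (t : ℝ) - F n (t : ℝ)|)
        ≤ Real.exp (Mconst α *
            ∑' p : Λ, (if |(p : ℝ × ℝ).2| ≤ (n : ℝ) then wab a b (p : ℝ × ℝ).2 else 0)) *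
          ∑' p : Λ, (if (n : ℝ) < |(p : ℝ × ℝ).2| then |(p : ℝ × ℝ).2| ^ (-1 / b) else 0)) ∧
    ∀ ε : ℝ, 0 < ε → ∃ N : ℕ, ∀ m n : ℕ, N ≤ m → N ≤ n →
      (⨆ t : Set.Ico t₀ t₁, |F m (t : ℝ) - F n (t : ℝ)|) ≤ ε := by
  have hdiff : Differentiable ℝ α := hsmooth.differentiable one_ne_zero
  have hbound (m n : ℕ) (hn : 2 ≤ n) (hnm : n < m) :=
    iSup_abs_sub_le_exp_mul_tail ha hab hbb' hrange hdiff hbd hΛ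
      (by exact_mod_cast one_le_two.trans hn) (by exact_mod_cast hnm.le) (hF m).2 (hF n).2
  refine ⟨hbound, fun ε hε => ?_⟩
  set K := Real.exp (Mconst α * ∑' p : Λ, wab a b (p : ℝ × ℝ).2)
  have hK : ∀ n : ℕ, Real.exp (Mconst α *
      ∑' p : Λ, (if |(p : ℝ × ℝ).2| ≤ (n : ℝ) then wab a b (p : ℝ × ℝ).2 else 0)) ≤ K := fun n =>
    Real.exp_le_exp.2 <|
      mul_le_mul_of_nonneg_left (tsum_ite_wab_le ha hab hbb' hΛ _) (Mconst_nonneg α)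
  obtain ⟨N, hN⟩ := ((tendsto_tsum_tail (ha.trans hab) hbb'.le hΛ).eventually
    (gt_mem_nhds (div_pos hε (Real.exp_pos _)))).exists_forall_of_atTop
  refine ⟨max N 2, fun m n hm hn => ?_⟩
  wlog hnm : n ≤ m generalizing m n
  · simpa only [abs_sub_comm] using this n m hn hm (le_of_not_ge hnm)
  rcases hnm.lt_or_eq with hlt | rfl
  · refine (hbound m n (le_of_max_le_right hn) hlt).trans ?_
    calc _ ≤ K * (ε / K) := mul_le_mul (hK n) (hN n (le_of_max_le_left hn)).le
            (tsum_nonneg fun p => by split_ifs <;> positivity) (Real.exp_pos _).le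
      _ = ε := mul_div_cancel₀ ε (Real.exp_pos _).ne'
  · simpa using hε.le

/-- The truncated solutions form a Cauchy sequence in the supremum norm, with the explicit
exponential bound for m > n ≥ 2. -/
theorem stmt6 (a b b' t₀ t₁ a₀ : ℝ) (ha : 0 < a) (hab : a < b) (hbb' : b < b') (hb1 : b' < 1)
    (ht : t₀ < t₁)
    (α : ℝ → ℝ) (hrange : ∀ x, α x ∈ Set.Icc a b) (hsmooth : ContDiff ℝ 1 α)
    (hbd : ∃ C, ∀ x, |deriv α x| ≤ C)
    (Λ : Set (ℝ × ℝ)) (hcount : Λ.Countable)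
    (hsubΛ : Λ ⊆ Set.Ioo t₀ t₁ ×ˢ (Set.univ : Set ℝ))
    (hΛ : Summable fun p : Λ => |(p : ℝ × ℝ).2| ^ (-1 / b'))
    (F : ℕ → ℝ → ℝ)
    (hF : ∀ n : ℕ, CadlagOn (F n) t₀ t₁ ∧
      ∀ t ∈ Set.Ico t₀ t₁, F n t = a₀ + jumpSumTrunc α Λ n t₀ t (F n)) :
    (∀ m n : ℕ, 2 ≤ n → n < m →
      (⨆ t : Set.Ico t₀ t₁, |F m (t : ℝ) - F n (t : ℝ)|)
        ≤ Real.exp (Mconst α *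
            ∑' p : Λ, (if |(p : ℝ × ℝ).2| ≤ (n : ℝ) then wab a b (p : ℝ × ℝ).2 else 0)) *
          ∑' p : Λ, (if (n : ℝ) < |(p : ℝ × ℝ).2| then |(p : ℝ × ℝ).2| ^ (-1 / b) else 0)) ∧
    ∀ ε : ℝ, 0 < ε → ∃ N : ℕ, ∀ m n : ℕ, N ≤ m → N ≤ n →
      (⨆ t : Set.Ico t₀ t₁, |F m (t : ℝ) - F n (t : ℝ)|) ≤ ε :=
  stmt6_general a b b' t₀ t₁ a₀ ha hab hbb' α hrange hsmooth hbd Λ hΛ F hF
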